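/- The 4×4 rook's graph and the Shrikhande graph are both strongly regular with parameters (16, 6, 2, 2) but are not isomorphic: the rook's graph's vertex neighborhoods induce a disjoint union of two 3-cliques, while the Shrikhande graph's vertex neighborhoods induce a 6-cycle. -/
import Mathlib


/-- The 4×4 rook's graph: vertices `{0,1,2,3}²`, adjacent iff they agree in exactly one
coordinate. -/
def rook : SimpleGraph (Fin 4 × Fin 4) :=
  SimpleGraph.fromRel (fun a b => a.1 = b.1 ∨ a.2 = b.2)

/-- The Shrikhande graph: vertices `(ℤ/4)²`, adjacent iff their difference is
`±(1,0)`, `±(0,1)` or `±(1,1)`. -/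
def shrikhande : SimpleGraph (ZMod 4 × ZMod 4) :=
  SimpleGraph.fromRel (fun a b =>
    b - a ∈ ({((1 : ZMod 4), (0 : ZMod 4)), (0, 1), (1, 1)} : Set (ZMod 4 × ZMod 4)))

/-- The disjoint union of two 3-cliques (triangles). -/
def twoTriangles : SimpleGraph (Fin 2 × Fin 3) :=
  SimpleGraph.fromRel (fun a b => a.1 = b.1)

/-- The cycle graph on `n` vertices, realized on `ZMod n`. -/
def cycleG (n : ℕ) : SimpleGraph (ZMod n) :=
  SimpleGraph.fromRel (fun i j => j = i + 1)

/-! ### Auxiliary machinery -/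

section Aux

/-- Computation-friendly form of `rook.Adj`. -/
def rawR (a b : Fin 4 × Fin 4) : Prop := a ≠ b ∧ (a.1 = b.1 ∨ a.2 = b.2)
instance rawRDec : ∀ a b, Decidable (rawR a b) := fun a b => by unfold rawR; infer_instance

lemma rookAdjIff (a b : Fin 4 × Fin 4) : rook.Adj a b ↔ rawR a b := by
  simp only [rook, SimpleGraph.fromRel_adj, rawR]
  constructor
  · rintro ⟨h, h2 | h2⟩ <;> [exact ⟨h, h2⟩; exact ⟨h, by tauto⟩]
  · rintro ⟨h, h2⟩; exact ⟨h, Or.inl h2⟩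

/-- Computation-friendly form of `shrikhande.Adj`. -/
def rawS (a b : ZMod 4 × ZMod 4) : Prop :=
  a ≠ b ∧ ((b - a = (1,0) ∨ b - a = (0,1) ∨ b - a = (1,1)) ∨
           (a - b = (1,0) ∨ a - b = (0,1) ∨ a - b = (1,1)))
instance rawSDec : ∀ a b, Decidable (rawS a b) := fun a b => by unfold rawS; infer_instance

lemma shrikAdjIff (a b : ZMod 4 × ZMod 4) : shrikhande.Adj a b ↔ rawS a b := by
  simp only [shrikhande, SimpleGraph.fromRel_adj, Set.mem_insert_iff,
    Set.mem_singleton_iff, rawS]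

/-- Computation-friendly form of `twoTriangles.Adj`. -/
def rawT (a b : Fin 2 × Fin 3) : Prop := a ≠ b ∧ a.1 = b.1
instance rawTDec : ∀ a b, Decidable (rawT a b) := fun a b => by unfold rawT; infer_instance

lemma twoTrianglesAdjIff (a b : Fin 2 × Fin 3) : twoTriangles.Adj a b ↔ rawT a b := by
  simp only [twoTriangles, SimpleGraph.fromRel_adj, rawT]
  constructor
  · rintro ⟨h, h2 | h2⟩ <;> [exact ⟨h, h2⟩; exact ⟨h, h2.symm⟩]
  · rintro ⟨h, h2⟩; exact ⟨h, Or.inl h2⟩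

/-- Computation-friendly form of `(cycleG 6).Adj`. -/
def rawC (a b : ZMod 6) : Prop := a ≠ b ∧ (b = a + 1 ∨ a = b + 1)
instance rawCDec : ∀ a b, Decidable (rawC a b) := fun a b => by unfold rawC; infer_instance

lemma cycleAdjIff (a b : ZMod 6) : (cycleG 6).Adj a b ↔ rawC a b := by
  simp only [cycleG, SimpleGraph.fromRel_adj, rawC]

/-! Neighborhood finsets -/

def nbrsR (v : Fin 4 × Fin 4) : Finset (Fin 4 × Fin 4) := Finset.univ.filter (rawR v)
def nbrsS (v : ZMod 4 × ZMod 4) : Finset (ZMod 4 × ZMod 4) := Finset.univ.filter (rawS v)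

lemma nbrsRcard : ∀ v, (nbrsR v).card = 6 := by decide
lemma nbrsRadj : ∀ v w, rawR v w → ((nbrsR v) ∩ (nbrsR w)).card = 2 := by decide
lemma nbrsRnadj : ∀ v w, v ≠ w → ¬ rawR v w → ((nbrsR v) ∩ (nbrsR w)).card = 2 := by decide
lemma nbrsScard : ∀ v, (nbrsS v).card = 6 := by decide
lemma nbrsSadj : ∀ v w, rawS v w → ((nbrsS v) ∩ (nbrsS w)).card = 2 := by decide
lemma nbrsSnadj : ∀ v w, v ≠ w → ¬ rawS v w → ((nbrsS v) ∩ (nbrsS w)).card = 2 := by decide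

/-- Isomorphisms restrict to neighbourhood-induced subgraphs. -/
def nbhdIso {V W : Type*} {G : SimpleGraph V} {H : SimpleGraph W} (φ : G ≃g H) (v : V) :
    (G.induce (G.neighborSet v)) ≃g (H.induce (H.neighborSet (φ v))) where
  toFun x := ⟨φ x.1, φ.map_rel_iff.mpr x.2⟩
  invFun y := ⟨φ.symm y.1, φ.map_rel_iff.mp (by rw [φ.apply_symm_apply]; exact y.2)⟩
  left_inv x := Subtype.ext (φ.toEquiv.symm_apply_apply x.1)
  right_inv y := Subtype.ext (φ.toEquiv.apply_symm_apply y.1)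
  map_rel_iff' := by
    intro a b
    simp only [SimpleGraph.comap_adj, Function.Embedding.coe_subtype]
    exact φ.map_rel_iff

/-- Translation automorphism of the rook's graph. -/
def rookT (v : Fin 4 × Fin 4) : rook ≃g rook where
  toEquiv := Equiv.subRight v
  map_rel_iff' := by
    intro a b
    simp only [Equiv.subRight_apply, rookAdjIff, rawR, Prod.fst_sub, Prod.snd_sub,
      sub_left_inj, ne_eq]

/-- Translation automorphism of the Shrikhande graph. -/
def shrikT (v : ZMod 4 × ZMod 4) : shrikhande ≃g shrikhande where
  toEquiv := Equiv.subRight v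
  map_rel_iff' := by
    intro a b
    simp only [Equiv.subRight_apply, shrikAdjIff, rawS, sub_sub_sub_cancel_right,
      sub_left_inj, ne_eq]

/-! Explicit neighbourhood isomorphisms at the origin. -/

def idx : Fin 4 → Fin 3 := fun i => if i = 1 then 0 else if i = 2 then 1 else 2
def unidx : Fin 3 → Fin 4 := fun i => if i = 0 then 1 else if i = 1 then 2 else 3

def gR : Fin 4 × Fin 4 → Fin 2 × Fin 3 := fun p =>
  if p.1 = 0 then (0, idx p.2) else (1, idx p.1)
def fR : Fin 2 × Fin 3 → Fin 4 × Fin 4 := fun y =>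
  if y.1 = 0 then (0, unidx y.2) else (unidx y.2, 0)

lemma hmemR : ∀ y, rawR (0,0) (fR y) := by decide
lemma hlfR : ∀ p, rawR (0,0) p → fR (gR p) = p := by decide
lemma hrfR : ∀ y, gR (fR y) = y := by decide
lemma hadjR : ∀ p q, rawR (0,0) p → rawR (0,0) q → (rawT (gR p) (gR q) ↔ rawR p q) := by decide

def e00R : (rook.induce (rook.neighborSet (0,0))) ≃g twoTriangles where
  toFun x := gR x.1
  invFun y := ⟨fR y, (rookAdjIff _ _).mpr (hmemR y)⟩
  left_inv x := Subtype.ext (hlfR x.1 ((rookAdjIff _ _).mp x.2))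
  right_inv y := hrfR y
  map_rel_iff' := by
    intro a b
    simp only [SimpleGraph.comap_adj, Function.Embedding.coe_subtype, Equiv.coe_fn_mk]
    rw [twoTrianglesAdjIff, rookAdjIff]
    exact hadjR a.1 b.1 ((rookAdjIff _ _).mp a.2) ((rookAdjIff _ _).mp b.2)

def gS : ZMod 4 × ZMod 4 → ZMod 6 := fun p =>
  if p = (1,0) then 0 else if p = (1,1) then 1 else if p = (0,1) then 2
  else if p = (3,0) then 3 else if p = (3,3) then 4 else 5
def fS : ZMod 6 → ZMod 4 × ZMod 4 := fun i =>
  if i = 0 then (1,0) else if i = 1 then (1,1) else if i = 2 then (0,1)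
  else if i = 3 then (3,0) else if i = 4 then (3,3) else (0,3)

lemma hmemS : ∀ y, rawS (0,0) (fS y) := by decide
lemma hlfS : ∀ p, rawS (0,0) p → fS (gS p) = p := by decide
lemma hrfS : ∀ y, gS (fS y) = y := by decide
lemma hadjS : ∀ p q, rawS (0,0) p → rawS (0,0) q → (rawC (gS p) (gS q) ↔ rawS p q) := by decide

def e00S : (shrikhande.induce (shrikhande.neighborSet (0,0))) ≃g cycleG 6 where
  toFun x := gS x.1
  invFun y := ⟨fS y, (shrikAdjIff _ _).mpr (hmemS y)⟩
  left_inv x := Subtype.ext (hlfS x.1 ((shrikAdjIff _ _).mp x.2))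
  right_inv y := hrfS y
  map_rel_iff' := by
    intro a b
    simp only [SimpleGraph.comap_adj, Function.Embedding.coe_subtype, Equiv.coe_fn_mk]
    rw [cycleAdjIff, shrikAdjIff]
    exact hadjS a.1 b.1 ((shrikAdjIff _ _).mp a.2) ((shrikAdjIff _ _).mp b.2)

lemma rookPart4 : ∀ v, Nonempty ((rook.induce (rook.neighborSet v)) ≃g twoTriangles) := by
  intro v
  refine ⟨(nbhdIso (rookT v) v).trans ?_⟩
  rw [show ((rookT v) v) = ((0,0) : Fin 4 × Fin 4) from sub_self v]
  exact e00R

lemma shrikPart5 : ∀ v, Nonempty ((shrikhande.induce (shrikhande.neighborSet v)) ≃g cycleG 6) := by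
  intro v
  refine ⟨(nbhdIso (shrikT v) v).trans ?_⟩
  rw [show ((shrikT v) v) = ((0,0) : ZMod 4 × ZMod 4) from sub_self v]
  exact e00S

lemma noTriC : ∀ a b c : ZMod 6, rawC a b → rawC a c → rawC b c → False := by decide

lemma noniso : ¬ Nonempty (rook ≃g shrikhande) := by
  rintro ⟨f⟩
  obtain ⟨e5⟩ := shrikPart5 (f (0,0))
  have E : twoTriangles ≃g cycleG 6 := (e00R.symm.trans (nbhdIso f (0,0))).trans e5
  have h1 : twoTriangles.Adj (0,0) (0,1) := (twoTrianglesAdjIff _ _).mpr (by decide)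
  have h2 : twoTriangles.Adj (0,0) (0,2) := (twoTrianglesAdjIff _ _).mpr (by decide)
  have h3 : twoTriangles.Adj (0,1) (0,2) := (twoTrianglesAdjIff _ _).mpr (by decide)
  exact noTriC (E (0,0)) (E (0,1)) (E (0,2))
    ((cycleAdjIff _ _).mp (E.map_rel_iff.mpr h1))
    ((cycleAdjIff _ _).mp (E.map_rel_iff.mpr h2))
    ((cycleAdjIff _ _).mp (E.map_rel_iff.mpr h3))

end Aux

/-- The 4×4 rook's graph and the Shrikhande graph are both strongly regular with parameters
`(16, 6, 2, 2)` but are not isomorphic: the rook's graph's vertex neighborhoods induce a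
disjoint union of two 3-cliques, while the Shrikhande graph's vertex neighborhoods induce a
6-cycle. -/
instance : DecidableRel rook.Adj := fun a b => by
  unfold rook; rw [SimpleGraph.fromRel_adj]; infer_instance

instance : DecidableRel shrikhande.Adj := fun a b => by
  unfold shrikhande; rw [SimpleGraph.fromRel_adj]; infer_instance

/-! SRG transfer lemmas -/

lemma rookNF (v : Fin 4 × Fin 4) : rook.neighborFinset v = nbrsR v := by
  ext x; simp [SimpleGraph.mem_neighborFinset, rookAdjIff, nbrsR]

lemma rookCN (v w : Fin 4 × Fin 4) :
    Fintype.card (rook.commonNeighbors v w) = ((nbrsR v) ∩ (nbrsR w)).card := by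
  rw [← Set.toFinset_card]
  congr 1
  ext x
  simp [SimpleGraph.mem_commonNeighbors, rookAdjIff, nbrsR]

lemma shrikNF (v : ZMod 4 × ZMod 4) : shrikhande.neighborFinset v = nbrsS v := by
  ext x; simp [SimpleGraph.mem_neighborFinset, shrikAdjIff, nbrsS]

lemma shrikCN (v w : ZMod 4 × ZMod 4) :
    Fintype.card (shrikhande.commonNeighbors v w) = ((nbrsS v) ∩ (nbrsS w)).card := by
  rw [← Set.toFinset_card]
  congr 1
  ext x
  simp [SimpleGraph.mem_commonNeighbors, shrikAdjIff, nbrsS]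

lemma rookSRG : rook.IsSRGWith 16 6 2 2 := by
  constructor
  · simp
  · intro v
    show (rook.neighborFinset v).card = 6
    rw [rookNF]; exact nbrsRcard v
  · intro v w h
    rw [rookCN]; exact nbrsRadj v w ((rookAdjIff v w).mp h)
  · intro v w hne h
    rw [rookCN]; exact nbrsRnadj v w hne (fun hr => h ((rookAdjIff v w).mpr hr))

lemma shrikSRG : shrikhande.IsSRGWith 16 6 2 2 := by
  constructor
  · simp
  · intro v
    show (shrikhande.neighborFinset v).card = 6
    rw [shrikNF]; exact nbrsScard v
  · intro v w h
    rw [shrikCN]; exact nbrsSadj v w ((shrikAdjIff v w).mp h)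
  · intro v w hne h
    rw [shrikCN]; exact nbrsSnadj v w hne (fun hr => h ((shrikAdjIff v w).mpr hr))


theorem stmt18 :
    rook.IsSRGWith 16 6 2 2 ∧
    shrikhande.IsSRGWith 16 6 2 2 ∧
    (¬ Nonempty (rook ≃g shrikhande)) ∧
    (∀ v, Nonempty ((rook.induce (rook.neighborSet v)) ≃g twoTriangles)) ∧
    (∀ v, Nonempty ((shrikhande.induce (shrikhande.neighborSet v)) ≃g cycleG 6)) := by
  exact ⟨rookSRG, shrikSRG, noniso, rookPart4, shrikPart5⟩
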